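/- arXiv:2410.18275 — 2 statements merged into one kernel-verified Lean document; each statement's English description precedes it below -/
import Mathlib

section
/- Let K ≥ 1 and n ≥ 1. For each arm j ∈ Fin K, let X_{j,1},…,X_{j,n} be independent {0,1}-valued (Bernoulli) random variables with mean μ j, all random variables across arms mutually independent, and let μ̂ j = (1/n) · Σᵢ X_{j,i}. Let a be any (random) arm maximizing μ̂. Then for every ε > 0, the probability that a is ε-optimal, i.e. that (max over j of μ j) − μ a ≤ ε, is at least 1 − 2·K·exp(−n·ε²/2). In particular, if each arm is pulled ⌊T/K⌋ = n times out of a total budget of T = n·K samples, the success probability is at least 1 − 2·K·exp(−T·ε²/(2K)). -/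
/-!
If every empirical mean is within `ε / 2` of its true mean, the empirical maximizer loses at most
`ε / 2 + ε / 2` against the best arm. By Hoeffding's lemma a `[0, 1]`-valued reward minus its mean
is sub-Gaussian with parameter `1 / 4`, so the centred sum of `n` independent pulls is sub-Gaussian
with parameter `n / 4`, and the Chernoff bound on both tails shows that one arm's estimate misses
by more than `ε / 2` with probability at most `2 exp (-n ε² / 2)`. A union bound over the `K` arms
finishes.
-/

open MeasureTheory ProbabilityTheory Real Finset
open scoped NNReal

namespace ProbabilityTheory.HasSubgaussianMGF

variable {Ω : Type*} {m : MeasurableSpace Ω} {μ : Measure Ω} {X : Ω → ℝ} {c : ℝ≥0}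

lemma measure_abs_ge_le (h : HasSubgaussianMGF X c μ) {ε : ℝ} (hε : 0 ≤ ε) :
    μ.real {ω | ε ≤ |X ω|} ≤ 2 * exp (-ε ^ 2 / (2 * c)) := by
  have htails : {ω | ε ≤ |X ω|} = {ω | ε ≤ X ω} ∪ {ω | ε ≤ (-X) ω} := by
    ext ω
    show ε ≤ |X ω| ↔ ε ≤ X ω ∨ ε ≤ -X ω
    rw [le_abs', le_neg, or_comm]
  calc μ.real {ω | ε ≤ |X ω|} ≤ μ.real {ω | ε ≤ X ω} + μ.real {ω | ε ≤ (-X) ω} :=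
        htails ▸ measureReal_union_le _ _
    _ ≤ exp (-ε ^ 2 / (2 * c)) + exp (-ε ^ 2 / (2 * c)) :=
        add_le_add (h.measure_ge_le hε) (h.neg.measure_ge_le hε)
    _ = 2 * exp (-ε ^ 2 / (2 * c)) := by ring

end ProbabilityTheory.HasSubgaussianMGF

section Hoeffding

variable {Ω ι : Type*} {m : MeasurableSpace Ω} {μ : Measure Ω} [IsProbabilityMeasure μ]
  {Y : ι → Ω → ℝ} {a b : ℝ}

theorem measure_abs_sum_sub_integral_ge_le_of_iIndepFun (hindep : iIndepFun Y μ)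
    (hmeas : ∀ i, AEMeasurable (Y i) μ) (hbdd : ∀ i, ∀ᵐ ω ∂μ, Y i ω ∈ Set.Icc a b)
    (s : Finset ι) {t : ℝ} (ht : 0 ≤ t) :
    μ.real {ω | t ≤ |∑ i ∈ s, (Y i ω - μ[Y i])|} ≤
      2 * exp (-2 * t ^ 2 / (#s * (b - a) ^ 2)) := by
  have hcentered : iIndepFun (fun i ω => Y i ω - μ[Y i]) μ :=
    hindep.comp (fun i x => x - ∫ ω, Y i ω ∂μ) fun i => measurable_id.sub_const _
  have hsum := HasSubgaussianMGF.sum_of_iIndepFun hcentered (s := s)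
    fun i _ => hasSubgaussianMGF_of_mem_Icc (hmeas i) (hbdd i)
  refine (hsum.measure_abs_ge_le ht).trans_eq ?_
  congr 2
  push_cast
  simp only [Finset.sum_const, nsmul_eq_mul, Real.norm_eq_abs, div_pow, sq_abs]
  field_simp

end Hoeffding

section EmpiricalMean

variable {Ω : Type*} {m : MeasurableSpace Ω} {μ : Measure Ω} [IsProbabilityMeasure μ]

theorem measure_abs_empiricalMean_sub_gt_le {n : ℕ} (hn : 0 < n) {Y : Fin n → Ω → ℝ} {p : ℝ}
    (hindep : iIndepFun Y μ) (hmeas : ∀ i, AEMeasurable (Y i) μ)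
    (hbdd : ∀ i, ∀ᵐ ω ∂μ, Y i ω ∈ Set.Icc 0 1) (hmean : ∀ i, μ[Y i] = p)
    {δ : ℝ} (hδ : 0 ≤ δ) :
    μ {ω | δ < |(1 / (n : ℝ)) * ∑ i, Y i ω - p|} ≤ ENNReal.ofReal (2 * exp (-2 * n * δ ^ 2)) := by
  have hn' : (0 : ℝ) < n := Nat.cast_pos.2 hn
  have hsubset : {ω | δ < |(1 / (n : ℝ)) * ∑ i, Y i ω - p|} ⊆
      {ω | n * δ ≤ |∑ i, (Y i ω - μ[Y i])|} := by
    intro ω hω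
    have hsum : ∑ i, (Y i ω - μ[Y i]) = n * ((1 / (n : ℝ)) * ∑ i, Y i ω - p) := by
      simp only [hmean, Finset.sum_sub_distrib, Finset.sum_const, Finset.card_univ,
        Fintype.card_fin, nsmul_eq_mul]
      field_simp
    show n * δ ≤ |∑ i, (Y i ω - μ[Y i])|
    rw [hsum, abs_mul, abs_of_pos hn']
    exact mul_le_mul_of_nonneg_left hω.le hn'.le
  calc μ {ω | δ < |(1 / (n : ℝ)) * ∑ i, Y i ω - p|}
      ≤ ENNReal.ofReal (μ.real {ω | n * δ ≤ |∑ i, (Y i ω - μ[Y i])|}) :=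
        (measure_mono hsubset).trans_eq (ofReal_measureReal).symm
    _ ≤ ENNReal.ofReal (2 * exp (-2 * n * δ ^ 2)) := by
        refine ENNReal.ofReal_le_ofReal ?_
        convert measure_abs_sum_sub_integral_ge_le_of_iIndepFun hindep hmeas hbdd Finset.univ
          (mul_nonneg hn'.le hδ) using 3
        simp only [Finset.card_univ, Fintype.card_fin]
        field_simp
        ring

end EmpiricalMean

theorem Finset.sup'_sub_le_two_mul_of_forall_abs_sub_le {ι : Type*} {s : Finset ι}
    (hs : s.Nonempty) {f g : ι → ℝ} {a : ι} {δ : ℝ} (hfg : ∀ j, |g j - f j| ≤ δ)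
    (ha : ∀ j ∈ s, g j ≤ g a) : s.sup' hs f - f a ≤ 2 * δ := by
  obtain ⟨j, hj, hsup'⟩ := s.exists_mem_eq_sup' hs f
  have hj' := abs_le.1 (hfg j)
  have ha' := abs_le.1 (hfg a)
  linarith [ha j hj]

/-- For `K` arms, each pulled `n ≥ 1` times with mutually independent
`{0,1}`-valued rewards of mean `μ j`, any (random) arm `a` maximizing the
empirical means `μ̂ j ω = (1/n) ∑ i, X j i ω` is ε-optimal,
i.e. `(max over j of μ j) - μ (a ω) ≤ ε`, with probability at least
`1 - 2 K exp(-n ε² / 2)`.  (With `n = ⌊T/K⌋` pulls per arm out of a total budget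
of `T = n K` samples, this bound equals `1 - 2 K exp(-T ε² / (2K))`.) -/
theorem naive_pac_eps_optimal_whp
    {Ω : Type*} [MeasureSpace Ω] [IsProbabilityMeasure (ℙ : Measure Ω)]
    (K n : ℕ) (hK : 1 ≤ K) (hn : 1 ≤ n)
    (X : Fin K → Fin n → Ω → ℝ) (μ : Fin K → ℝ)
    (hmeas : ∀ j i, Measurable (X j i))
    (hindep : iIndepFun
      (fun p : Fin K × Fin n => X p.1 p.2) ℙ)
    (hval : ∀ j i ω, X j i ω = 0 ∨ X j i ω = 1)
    (hmean : ∀ j i, ∫ ω, X j i ω ∂ℙ = μ j)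
    (a : Ω → Fin K)
    (hmax : ∀ ω, ∀ j : Fin K,
      (1 / (n : ℝ)) * ∑ i, X j i ω ≤ (1 / (n : ℝ)) * ∑ i, X (a ω) i ω)
    (ε : ℝ) (hε : 0 < ε) :
    1 - ENNReal.ofReal (2 * (K : ℝ) * Real.exp (-(n : ℝ) * ε ^ 2 / 2)) ≤
      ℙ {ω | Finset.univ.sup' ⟨⟨0, hK⟩, Finset.mem_univ _⟩ μ - μ (a ω) ≤ ε} := by
  set E : Fin K → Set Ω := fun j => {ω | ε / 2 < |(1 / (n : ℝ)) * ∑ i, X j i ω - μ j|}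
  have hE : ∀ j, ℙ (E j) ≤ ENNReal.ofReal (2 * exp (-(n : ℝ) * ε ^ 2 / 2)) := fun j => by
    convert measure_abs_empiricalMean_sub_gt_le hn (hindep.precomp (Prod.mk_right_injective j))
      (fun i => (hmeas j i).aemeasurable)
      (fun i => ae_of_all _ fun ω => by rcases hval j i ω with h | h <;> simp [h])
      (hmean j) (half_pos hε).le using 4
    ring
  have hgood : (⋃ j, E j)ᶜ ⊆
      {ω | Finset.univ.sup' ⟨⟨0, hK⟩, Finset.mem_univ _⟩ μ - μ (a ω) ≤ ε} := fun ω hω => by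
    simp only [E, Set.compl_iUnion, Set.mem_iInter, Set.mem_compl_iff, Set.mem_ofPred_eq,
      not_lt] at hω
    exact (Finset.sup'_sub_le_two_mul_of_forall_abs_sub_le _ hω fun j _ => hmax ω j).trans_eq
      (by ring)
  calc 1 - ENNReal.ofReal (2 * (K : ℝ) * exp (-(n : ℝ) * ε ^ 2 / 2))
      = 1 - ∑ _j : Fin K, ENNReal.ofReal (2 * exp (-(n : ℝ) * ε ^ 2 / 2)) := by
        rw [Finset.sum_const, Finset.card_univ, Fintype.card_fin, nsmul_eq_mul,
          ← ENNReal.ofReal_natCast, ← ENNReal.ofReal_mul (Nat.cast_nonneg K), mul_left_comm,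
          mul_assoc]
    _ ≤ 1 - ℙ (⋃ j, E j) := tsub_le_tsub_left
        ((measure_iUnion_fintype_le _ E).trans (sum_le_sum fun j _ => hE j)) 1
    _ ≤ ℙ (⋃ j, E j)ᶜ :=
        tsub_le_iff_left.2 (by simpa using measure_univ_le_add_compl (μ := ℙ) (⋃ j, E j))
    _ ≤ _ := measure_mono hgood
end

section
/- Let K ≥ 1, ε > 0 and δ ∈ (0,1). For each arm j ∈ Fin K, let X_{j,1},…,X_{j,n} be independent {0,1}-valued (Bernoulli) random variables with mean μ j, all random variables across arms mutually independent, and let μ̂ j = (1/n) · Σᵢ X_{j,i}. If the number of pulls per arm satisfies n ≥ (2/ε²)·ln(2K/δ), then with probability at least 1 − δ any arm a maximizing μ̂ is ε-optimal, i.e. (max over j of μ j) − μ a ≤ ε. -/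
/-!
By Hoeffding's inequality, the empirical mean of each arm lies within `ε / 2` of its true mean
except with probability `2 exp (-n ε² / 2) ≤ δ / K`. A union bound over the `K` arms makes all
empirical means accurate with probability at least `1 - δ`, and then an empirical maximiser `a`
satisfies `μ j - μ a < (μ̂ j + ε / 2) - (μ̂ a - ε / 2) ≤ ε` for every arm `j`.
-/

open MeasureTheory ProbabilityTheory Real Finset
open scoped NNReal

section Concentration

variable {Ω : Type*} [MeasurableSpace Ω] {μ : Measure Ω}

lemma ProbabilityTheory.HasSubgaussianMGF.measure_abs_ge_le_s4 {X : Ω → ℝ} {c : ℝ≥0}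
    (h : HasSubgaussianMGF X c μ) {ε : ℝ} (hε : 0 ≤ ε) :
    μ.real {ω | ε ≤ |X ω|} ≤ 2 * exp (-ε ^ 2 / (2 * c)) := by
  have hsplit : {ω | ε ≤ |X ω|} = {ω | ε ≤ X ω} ∪ {ω | ε ≤ (-X) ω} := by
    ext ω
    simp only [Set.mem_ofPred_eq, Set.mem_union, Pi.neg_apply, le_abs', le_neg, or_comm]
  rw [hsplit]
  linarith [measureReal_union_le (μ := μ) {ω | ε ≤ X ω} {ω | ε ≤ (-X) ω},
    h.measure_ge_le hε, h.neg.measure_ge_le hε]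

theorem measureReal_abs_sum_sub_integral_ge_le [IsProbabilityMeasure μ] {ι : Type*}
    {Y : ι → Ω → ℝ} (hindep : iIndepFun Y μ) (hmeas : ∀ i, AEMeasurable (Y i) μ) {a b : ℝ}
    (hY : ∀ i, ∀ᵐ ω ∂μ, Y i ω ∈ Set.Icc a b) (s : Finset ι) {t : ℝ} (ht : 0 ≤ t) :
    μ.real {ω | t ≤ |∑ i ∈ s, (Y i ω - μ[Y i])|} ≤
      2 * exp (-2 * t ^ 2 / (#s * (b - a) ^ 2)) := by
  have hcentered : iIndepFun (fun i ω => Y i ω - μ[Y i]) μ := by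
    exact hindep.comp (fun i x => x - μ[Y i]) fun i => measurable_sub_const _
  have hsum := HasSubgaussianMGF.sum_of_iIndepFun hcentered (s := s)
    fun i _ => hasSubgaussianMGF_of_mem_Icc (hmeas i) (hY i)
  have hc : 2 * ((∑ i ∈ s, (‖b - a‖₊ / 2) ^ 2 : ℝ≥0) : ℝ) = #s * (b - a) ^ 2 / 2 := by
    push_cast
    rw [sum_const, nsmul_eq_mul, Real.norm_eq_abs, div_pow, sq_abs]
    ring
  convert hsum.measure_abs_ge_le_s4 ht using 3
  rw [hc, div_div_eq_mul_div]
  ring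

theorem measureReal_abs_sampleMean_sub_ge_le [IsProbabilityMeasure μ] {n : ℕ}
    {Y : Fin n → Ω → ℝ} (hindep : iIndepFun Y μ) (hmeas : ∀ i, AEMeasurable (Y i) μ) {a b m : ℝ}
    (hY : ∀ i, ∀ᵐ ω ∂μ, Y i ω ∈ Set.Icc a b) (hmean : ∀ i, μ[Y i] = m) {t : ℝ} (ht : 0 ≤ t) :
    μ.real {ω | t ≤ |1 / n * ∑ i, Y i ω - m|} ≤ 2 * exp (-2 * n * t ^ 2 / (b - a) ^ 2) := by
  rcases n.eq_zero_or_pos with rfl | hn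
  · simpa using measureReal_le_one.trans one_le_two
  have hn' : (n : ℝ) ≠ 0 := by positivity
  have hset : {ω | t ≤ |1 / n * ∑ i, Y i ω - m|} = {ω | n * t ≤ |∑ i, (Y i ω - μ[Y i])|} := by
    ext ω
    simp only [Set.mem_ofPred_eq, hmean, sum_sub_distrib, sum_const, card_univ, Fintype.card_fin,
      nsmul_eq_mul]
    rw [show ∑ i, Y i ω - n * m = n * (1 / n * ∑ i, Y i ω - m) by field_simp, abs_mul,
      Nat.abs_cast, mul_le_mul_iff_right₀ (by positivity)]
  rw [hset]
  convert measureReal_abs_sum_sub_integral_ge_le hindep hmeas hY univ (t := n * t)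
    (by positivity) using 3
  rw [card_univ, Fintype.card_fin, mul_pow, sq (n : ℝ), mul_assoc (n : ℝ), mul_left_comm,
    mul_div_mul_left _ _ hn']
  ring

lemma one_sub_sum_measureReal_le [IsProbabilityMeasure μ] {ι : Type*} [Fintype ι]
    (B : ι → Set Ω) {G : Set Ω} (hG : ∀ ω, (∀ j, ω ∉ B j) → ω ∈ G) :
    1 - ∑ j, μ.real (B j) ≤ μ.real G := by
  have hcover : Set.univ ⊆ G ∪ ⋃ j, B j := fun ω _ =>
    (em (∃ j, ω ∈ B j)).elim (fun h => Or.inr (Set.mem_iUnion.2 h))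
      fun h => Or.inl (hG ω (not_exists.1 h))
  have := (measureReal_mono (μ := μ) hcover).trans (measureReal_union_le G (⋃ j, B j))
  linarith [probReal_univ (μ := μ), measureReal_iUnion_fintype_le (μ := μ) B]

end Concentration

lemma two_mul_exp_neg_le_div {K δ x : ℝ} (hK : 0 < K) (hδ : 0 < δ)
    (h : log (2 * K / δ) ≤ x) : 2 * exp (-x) ≤ δ / K := by
  calc 2 * exp (-x) ≤ 2 * exp (-log (2 * K / δ)) := by gcongr
    _ = δ / K := by
      rw [exp_neg, exp_log (by positivity)]
      field_simp

theorem naive_pac_sample_complexity_general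
    {Ω : Type*} [MeasureSpace Ω] [IsProbabilityMeasure (ℙ : Measure Ω)]
    (K n : ℕ) (hK : 1 ≤ K) (ε δ : ℝ) (hε : 0 < ε) (hδ0 : 0 < δ)
    (X : Fin K → Fin n → Ω → ℝ) (μ : Fin K → ℝ)
    (hmeas : ∀ j i, Measurable (X j i))
    (hindep : iIndepFun
      (fun p : Fin K × Fin n => X p.1 p.2) ℙ)
    (hval : ∀ j i ω, X j i ω = 0 ∨ X j i ω = 1)
    (hmean : ∀ j i, ∫ ω, X j i ω ∂ℙ = μ j)
    (hn : (2 / ε ^ 2) * Real.log (2 * (K : ℝ) / δ) ≤ (n : ℝ)) :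
    ENNReal.ofReal (1 - δ) ≤
      ℙ {ω | ∀ a : Fin K,
        (∀ j : Fin K,
          (1 / (n : ℝ)) * ∑ i, X j i ω ≤ (1 / (n : ℝ)) * ∑ i, X a i ω) →
        Finset.univ.sup' ⟨⟨0, hK⟩, Finset.mem_univ _⟩ μ - μ a ≤ ε} := by
  have hK0 : (0 : ℝ) < K := by exact_mod_cast hK
  have hlog : log (2 * K / δ) ≤ 2 * n * (ε / 2) ^ 2 := by
    rw [div_mul_eq_mul_div, div_le_iff₀ (by positivity)] at hn
    linarith
  have hdev : ∀ j,
      (ℙ : Measure Ω).real {ω | ε / 2 ≤ |1 / (n : ℝ) * ∑ i, X j i ω - μ j|} ≤ δ / K := by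
    intro j
    have hbound := measureReal_abs_sampleMean_sub_ge_le
      (hindep.precomp (Prod.mk_right_injective j)) (fun i => (hmeas j i).aemeasurable)
      (a := 0) (b := 1)
      (fun i => ae_of_all _ fun ω => by rcases hval j i ω with h | h <;> simp [h])
      (hmean j) (half_pos hε).le
    simp only [sub_zero, one_pow, div_one] at hbound
    exact hbound.trans (by simpa only [neg_mul] using two_mul_exp_neg_le_div hK0 hδ0 hlog)
  rw [ENNReal.ofReal_le_iff_le_toReal (measure_ne_top _ _), ← measureReal_def]
  refine le_trans ?_ (one_sub_sum_measureReal_le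
    (fun j ↦ {ω | ε / 2 ≤ |1 / (n : ℝ) * ∑ i, X j i ω - μ j|}) fun ω hω a ha => ?_)
  · have := sum_le_sum fun j (_ : j ∈ univ) => hdev j
    rw [sum_const, card_univ, Fintype.card_fin, nsmul_eq_mul, mul_div_cancel₀ _ hK0.ne'] at this
    linarith
  · simp only [Set.mem_ofPred_eq, not_le, abs_lt] at hω
    refine sub_le_iff_le_add.2 (sup'_le _ _ fun j _ => ?_)
    linarith [hω j, hω a, ha j]

/-- `(ε,δ)`-PAC sample complexity for the naive best-arm algorithm:
with `K` arms of mutually independent `{0,1}`-valued rewards with means `μ j`,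
each pulled `n ≥ (2/ε²)·ln(2K/δ)` times, with probability at least `1 - δ`
every arm `a` maximizing the empirical means `μ̂ j ω = (1/n) ∑ i, X j i ω` is
ε-optimal: `(max over j of μ j) - μ a ≤ ε`. -/
theorem naive_pac_sample_complexity
    {Ω : Type*} [MeasureSpace Ω] [IsProbabilityMeasure (ℙ : Measure Ω)]
    (K n : ℕ) (hK : 1 ≤ K) (ε δ : ℝ) (hε : 0 < ε) (hδ0 : 0 < δ) (hδ1 : δ < 1)
    (X : Fin K → Fin n → Ω → ℝ) (μ : Fin K → ℝ)
    (hmeas : ∀ j i, Measurable (X j i))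
    (hindep : iIndepFun
      (fun p : Fin K × Fin n => X p.1 p.2) ℙ)
    (hval : ∀ j i ω, X j i ω = 0 ∨ X j i ω = 1)
    (hmean : ∀ j i, ∫ ω, X j i ω ∂ℙ = μ j)
    (hn : (2 / ε ^ 2) * Real.log (2 * (K : ℝ) / δ) ≤ (n : ℝ)) :
    ENNReal.ofReal (1 - δ) ≤
      ℙ {ω | ∀ a : Fin K,
        (∀ j : Fin K,
          (1 / (n : ℝ)) * ∑ i, X j i ω ≤ (1 / (n : ℝ)) * ∑ i, X a i ω) →
        Finset.univ.sup' ⟨⟨0, hK⟩, Finset.mem_univ _⟩ μ - μ a ≤ ε} :=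
  naive_pac_sample_complexity_general K n hK ε δ hε hδ0 X μ hmeas hindep hval hmean hn
end
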